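/- arXiv:2505.11081 — 7 statements merged into one kernel-verified Lean document; each statement's English description precedes it below -/
import Mathlib

section
/- In a finite-horizon deterministic MDP with KL regularization toward a full-support reference policy π_ref, the unique fixed point q of the soft Bellman equation q(s_t,a_t) = r(s_t,a_t) + γ(s_t,a_t)·β·ln Σ_{a'} π_ref(a'|s_{t+1})·exp(q(s_{t+1},a')/β) (over all admissible transitions, with γ(s,a)=0 at terminal pairs) yields the unique optimal policy π*(a|s) ∝ π_ref(a|s)·exp(q(s,a)/β) maximizing the KL-regularized return J(π) = E[Σ_t γ^{t−1}(r(s_t,a_t) − β·ln(π(a_t|s_t)/π_ref(a_t|s_t)))]. -/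
/-- Pointwise Gibbs inequality step. -/
lemma stmt4_pointwise (β wa pa ca Z : ℝ) (hβ : 0 < β) (hpa : 0 < pa)
    (hwa : 0 ≤ wa) (hZ : 0 < Z) :
    wa * (ca - β * Real.log (wa / pa))
      ≤ β * (wa * Real.log Z + (pa * Real.exp (ca / β) / Z - wa)) ∧
    (wa * (ca - β * Real.log (wa / pa))
      = β * (wa * Real.log Z + (pa * Real.exp (ca / β) / Z - wa)) →
      wa = pa * Real.exp (ca / β) / Z) := by
  have hga : 0 < pa * Real.exp (ca / β) / Z := by positivity
  set ga : ℝ := pa * Real.exp (ca / β) / Z with hga_def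
  rcases eq_or_lt_of_le hwa with h0 | h0
  · constructor
    · rw [← h0]; simp; nlinarith
    · intro h; exfalso; rw [← h0] at h; simp at h
      rcases h with h | h
      · linarith
      · linarith
  · -- wa > 0
    have hβ0 : (β : ℝ) ≠ 0 := ne_of_gt hβ
    have hx : 0 < ga / wa := div_pos hga h0
    have h1 : Real.log (wa / pa) = Real.log wa - Real.log pa :=
      Real.log_div (ne_of_gt h0) (ne_of_gt hpa)
    have h2 : Real.log (ga / wa)
        = Real.log pa + ca / β - Real.log Z - Real.log wa := by
      rw [Real.log_div (ne_of_gt hga) (ne_of_gt h0), hga_def,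
        Real.log_div (by positivity) (ne_of_gt hZ),
        Real.log_mul (ne_of_gt hpa) (Real.exp_ne_zero _), Real.log_exp]
    have hgw : ga = wa * (ga / wa) := (mul_div_cancel₀ _ (ne_of_gt h0)).symm
    have key : wa * (ca - β * Real.log (wa / pa))
        = β * (wa * Real.log Z + (ga - wa))
          - β * wa * (ga / wa - 1 - Real.log (ga / wa)) := by
      rw [h1, h2]
      rw [hgw]
      field_simp
      ring
    have hlog := Real.log_le_sub_one_of_pos hx
    have hnn : 0 ≤ β * wa * (ga / wa - 1 - Real.log (ga / wa)) := by
      have h6 : 0 ≤ ga / wa - 1 - Real.log (ga / wa) := by linarith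
      have h7 : 0 ≤ β * wa := by positivity
      exact mul_nonneg h7 h6
    constructor
    · linarith
    · intro heq
      have h3 : β * wa * (ga / wa - 1 - Real.log (ga / wa)) = 0 := by linarith [key, heq]
      have h4 : ga / wa - 1 - Real.log (ga / wa) = 0 := by
        have : β * wa ≠ 0 := by positivity
        by_contra hne
        exact this (by rcases mul_eq_zero.mp h3 with h | h; exact h; exact absurd h hne)
      have h5 : ga / wa = 1 := by
        by_contra hne
        have := Real.log_lt_sub_one_of_pos hx hne
        linarith
      have := (div_eq_one_iff_eq (ne_of_gt h0)).mp h5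
      linarith

/-- Gibbs variational principle with equality case. -/
lemma stmt4_gibbs {A : Type*} [Fintype A] [Nonempty A] (β : ℝ) (hβ : 0 < β)
    (p w c : A → ℝ) (hp : ∀ a, 0 < p a) (hw : ∀ a, 0 ≤ w a)
    (hw1 : ∑ a, w a = 1) :
    (∑ a, w a * (c a - β * Real.log (w a / p a))
      ≤ β * Real.log (∑ a, p a * Real.exp (c a / β))) ∧
    (∑ a, w a * (c a - β * Real.log (w a / p a))
      = β * Real.log (∑ a, p a * Real.exp (c a / β)) →
      ∀ a, w a = p a * Real.exp (c a / β) / (∑ a', p a' * Real.exp (c a' / β))) := by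
  set Z : ℝ := ∑ a, p a * Real.exp (c a / β) with hZ_def
  have hZ : 0 < Z := Finset.sum_pos (fun a _ => mul_pos (hp a) (Real.exp_pos _)) Finset.univ_nonempty
  have hgsum : ∑ a, p a * Real.exp (c a / β) / Z = 1 := by
    rw [← Finset.sum_div, ← hZ_def, div_self (ne_of_gt hZ)]
  have hpw := fun a => stmt4_pointwise β (w a) (p a) (c a) Z hβ (hp a) (hw a) hZ
  have hRHSsum : ∑ a, β * (w a * Real.log Z + (p a * Real.exp (c a / β) / Z - w a))
      = β * Real.log Z := by
    rw [← Finset.mul_sum]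
    congr 1
    rw [Finset.sum_add_distrib, Finset.sum_sub_distrib, ← Finset.sum_mul, hw1, hgsum]
    ring
  have hle : ∑ a, w a * (c a - β * Real.log (w a / p a)) ≤ β * Real.log Z := by
    calc ∑ a, w a * (c a - β * Real.log (w a / p a))
        ≤ ∑ a, β * (w a * Real.log Z + (p a * Real.exp (c a / β) / Z - w a)) :=
          Finset.sum_le_sum (fun a _ => (hpw a).1)
      _ = β * Real.log Z := hRHSsum
  refine ⟨hle, fun heq a => ?_⟩
  have := (Finset.sum_eq_sum_iff_of_le (fun a _ => (hpw a).1)).mp (by rw [heq, hRHSsum])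
  exact (hpw a).2 (this a (Finset.mem_univ a))


/-- In a finite-horizon deterministic MDP (states are bounded-length
sequences, encoded here by a rank function `len` that strictly decreases along
non-terminal transitions, the discount `γfun s a ∈ {0, γd}` vanishing exactly at
terminal pairs), with KL-regularization of strength `β > 0` toward a full-support
reference policy `πref`, the soft Bellman equation
`q s a = r s a + γfun s a * β * ln ∑ a', πref (step s a) a' * exp (q (step s a) a' / β)`
has a unique fixed point `q`, and the associated Gibbs policy
`πstar s a ∝ πref s a * exp (q s a / β)` is the unique optimal policy: for any policy
`π` with regularized value `V` (satisfying the policy-evaluation recursion), `V` is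
dominated by the optimal value `Vstar s = β * ln ∑ a, πref s a * exp (q s a / β)`, with
equality everywhere only for `π = πstar`. -/
theorem stmt_4 {S A : Type*} [Fintype A] [Nonempty A]
    (step : S → A → S) (r : S → A → ℝ) (γfun : S → A → ℝ) (γd β : ℝ)
    (len : S → ℕ)
    (hβ : 0 < β) (hγd : 0 < γd) (hγd1 : γd ≤ 1)
    (hγ : ∀ s a, γfun s a = 0 ∨ γfun s a = γd)
    (hterm : ∀ s a, γfun s a ≠ 0 → len (step s a) < len s)
    (πref : S → A → ℝ) (hπref : ∀ s a, 0 < πref s a)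
    (hπrefsum : ∀ s, ∑ a, πref s a = 1)
    (q : S → A → ℝ)
    (hq : ∀ s a, q s a = r s a + γfun s a *
      (β * Real.log (∑ a', πref (step s a) a' * Real.exp (q (step s a) a' / β))))
    (πstar : S → A → ℝ)
    (hπstar : ∀ s a, πstar s a =
      πref s a * Real.exp (q s a / β) / ∑ a', πref s a' * Real.exp (q s a' / β))
    (Vstar : S → ℝ)
    (hVstar : ∀ s, Vstar s = β * Real.log (∑ a, πref s a * Real.exp (q s a / β))) :
    (∀ q' : S → A → ℝ,
      (∀ s a, q' s a = r s a + γfun s a *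
        (β * Real.log (∑ a', πref (step s a) a' * Real.exp (q' (step s a) a' / β)))) →
      q' = q) ∧
    (∀ π : S → A → ℝ, (∀ s a, 0 ≤ π s a) → (∀ s, ∑ a, π s a = 1) →
      ∀ V : S → ℝ,
        (∀ s, V s = ∑ a, π s a *
          (r s a - β * Real.log (π s a / πref s a) + γfun s a * V (step s a))) →
        (∀ s, V s ≤ Vstar s) ∧ ((∀ s, V s = Vstar s) → π = πstar)) := by
  have hqV : ∀ s a, q s a = r s a + γfun s a * Vstar (step s a) := by
    intro s a; rw [hq s a, hVstar (step s a)]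
  have hγnn : ∀ s a, 0 ≤ γfun s a := by
    intro s a; rcases hγ s a with h | h <;> rw [h] <;> linarith
  constructor
  · -- uniqueness of the fixed point
    intro q' hq'
    have key : ∀ n : ℕ, ∀ s, len s < n → ∀ a, q' s a = q s a := by
      intro n
      induction n with
      | zero => intro s hs; omega
      | succ n ih =>
        intro s hs a
        rw [hq' s a, hq s a]
        rcases hγ s a with h0 | hgd
        · rw [h0]; ring
        · have hne : γfun s a ≠ 0 := by rw [hgd]; exact ne_of_gt hγd
          have hlt : len (step s a) < n := by
            have := hterm s a hne; omega
          have heq : ∀ a', q' (step s a) a' = q (step s a) a' := ih (step s a) hlt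
          simp only [heq]
    funext s a
    exact key (len s + 1) s (Nat.lt_succ_self _) a
  · intro π hπ0 hπ1 V hV
    have hle : ∀ s, V s ≤ Vstar s := by
      have key : ∀ n : ℕ, ∀ s, len s < n → V s ≤ Vstar s := by
        intro n
        induction n with
        | zero => intro s hs; omega
        | succ n ih =>
          intro s hs
          have hc : ∀ a, r s a + γfun s a * V (step s a) ≤ q s a := by
            intro a
            rw [hqV s a]
            rcases hγ s a with h0 | hgd
            · rw [h0]; simp
            · have hne : γfun s a ≠ 0 := by rw [hgd]; exact ne_of_gt hγd
              have hlt : len (step s a) < n := by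
                have := hterm s a hne; omega
              have := ih (step s a) hlt
              have := mul_le_mul_of_nonneg_left this (hγnn s a)
              linarith
          calc V s = ∑ a, π s a *
                ((r s a + γfun s a * V (step s a)) - β * Real.log (π s a / πref s a)) := by
                rw [hV s]; exact Finset.sum_congr rfl (fun a _ => by ring)
            _ ≤ ∑ a, π s a * (q s a - β * Real.log (π s a / πref s a)) := by
                refine Finset.sum_le_sum (fun a _ => ?_)
                exact mul_le_mul_of_nonneg_left (by linarith [hc a]) (hπ0 s a)
            _ ≤ β * Real.log (∑ a, πref s a * Real.exp (q s a / β)) :=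
                (stmt4_gibbs β hβ (πref s) (π s) (q s) (hπref s) (hπ0 s) (hπ1 s)).1
            _ = Vstar s := (hVstar s).symm
      intro s
      exact key (len s + 1) s (Nat.lt_succ_self _)
    refine ⟨hle, fun hVeq => ?_⟩
    funext s a
    have hsum : V s = ∑ a, π s a * (q s a - β * Real.log (π s a / πref s a)) := by
      rw [hV s]
      refine Finset.sum_congr rfl (fun a _ => ?_)
      rw [hqV s a, hVeq (step s a)]
      ring
    have heq : ∑ a, π s a * (q s a - β * Real.log (π s a / πref s a))
        = β * Real.log (∑ a, πref s a * Real.exp (q s a / β)) := by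
      rw [← hsum, hVeq s, hVstar s]
    have := (stmt4_gibbs β hβ (πref s) (π s) (q s) (hπref s) (hπ0 s) (hπ1 s)).2 heq a
    rw [this, hπstar s a]
end

section
/- Potential-based reward shaping preserves the optimal policy: let φ : S → ℝ be any state function and define the shaped reward r_φ(s_t,a_t,s_{t+1}) = r(s_t,a_t) + γ(s_t,a_t)·β·φ(s_{t+1}) − β·φ(s_t). If g is the fixed point of β·g(s_t,a_t) = r(s_t,a_t) + β·ln π_ref(a_t|s_t) + γ(s_t,a_t)·β·v_g(s_{t+1}) and g_φ is the fixed point of the same equation with r replaced by r_φ, then g_φ(s,a) = g(s,a) − φ(s) for all admissible (s,a), and the softmax policies coincide: π_{g_φ} = π_g. -/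
/-- potential-based reward shaping preserves the optimal policy.  If `g`
is the fixed point of `β * g s a = r s a + β * ln (πref s a) + γfun s a * β * v_g (step s a)`
and `gφ` is the fixed point of the same equation with `r` replaced by the shaped reward
`r_φ(s,a,s') = r s a + γfun s a * β * φ s' - β * φ s`, then `gφ s a = g s a - φ s` for
all `(s,a)` and the softmax policies of `gφ` and `g` coincide. -/
theorem stmt_6 {S A : Type*} [Fintype A] [Nonempty A]
    (step : S → A → S) (r : S → A → ℝ) (γfun : S → A → ℝ) (γd β : ℝ)
    (len : S → ℕ)
    (hβ : 0 < β) (hγd : 0 < γd) (hγd1 : γd ≤ 1)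
    (hγ : ∀ s a, γfun s a = 0 ∨ γfun s a = γd)
    (hterm : ∀ s a, γfun s a ≠ 0 → len (step s a) < len s)
    (πref : S → A → ℝ) (hπref : ∀ s a, 0 < πref s a)
    (hπrefsum : ∀ s, ∑ a, πref s a = 1)
    (φ : S → ℝ)
    (rφ : S → A → ℝ)
    (hrφ : ∀ s a, rφ s a = r s a + γfun s a * (β * φ (step s a)) - β * φ s)
    (g gφ : S → A → ℝ)
    (hg : ∀ s a, β * g s a = r s a + β * Real.log (πref s a) +
      γfun s a * (β * Real.log (∑ a', Real.exp (g (step s a) a'))))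
    (hgφ : ∀ s a, β * gφ s a = rφ s a + β * Real.log (πref s a) +
      γfun s a * (β * Real.log (∑ a', Real.exp (gφ (step s a) a')))) :
    (∀ s a, gφ s a = g s a - φ s) ∧
    (∀ s a,
      Real.exp (gφ s a) / (∑ a', Real.exp (gφ s a')) =
      Real.exp (g s a) / (∑ a', Real.exp (g s a'))) := by
  have key0 : ∀ n s, len s = n → ∀ a, gφ s a = g s a - φ s := by
    intro n
    induction n using Nat.strong_induction_on with
    | _ n ih =>
      intro s hn a
      have h1 := hgφ s a
      have h2 := hg s a
      rw [hrφ] at h1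
      rcases hγ s a with h0 | hd
      · rw [h0] at h1 h2
        simp only [zero_mul, add_zero] at h1 h2
        exact mul_left_cancel₀ hβ.ne' (show β * gφ s a = β * (g s a - φ s) by
          rw [mul_sub]; linarith)
      · have hne : γfun s a ≠ 0 := by rw [hd]; exact ne_of_gt hγd
        have hlt : len (step s a) < n := hn ▸ hterm s a hne
        have hIH : ∀ a', gφ (step s a) a' = g (step s a) a' - φ (step s a) :=
          ih (len (step s a)) hlt (step s a) rfl
        have hsum : (∑ a', Real.exp (gφ (step s a) a'))
            = Real.exp (-φ (step s a)) * ∑ a', Real.exp (g (step s a) a') := by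
          rw [Finset.mul_sum]
          refine Finset.sum_congr rfl fun a' _ => ?_
          rw [hIH a', sub_eq_add_neg, add_comm, Real.exp_add]
        have hpos : 0 < ∑ a', Real.exp (g (step s a) a') :=
          Finset.sum_pos (fun a' _ => Real.exp_pos _) Finset.univ_nonempty
        have hlog : Real.log (∑ a', Real.exp (gφ (step s a) a'))
            = Real.log (∑ a', Real.exp (g (step s a) a')) - φ (step s a) := by
          rw [hsum, Real.log_mul (ne_of_gt (Real.exp_pos _)) (ne_of_gt hpos),
            Real.log_exp]; ring
        rw [hlog] at h1
        rw [hd] at h1 h2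
        exact mul_left_cancel₀ hβ.ne' (show β * gφ s a = β * (g s a - φ s) by
          rw [mul_sub]; nlinarith [h1, h2])
  have key : ∀ s a, gφ s a = g s a - φ s := fun s a => key0 (len s) s rfl a
  refine ⟨key, fun s a => ?_⟩
  have hsum : (∑ a', Real.exp (gφ s a')) = Real.exp (-φ s) * ∑ a', Real.exp (g s a') := by
    rw [Finset.mul_sum]
    refine Finset.sum_congr rfl fun a' _ => ?_
    rw [key s a', sub_eq_add_neg, add_comm, Real.exp_add]
  rw [key s a, hsum, sub_eq_add_neg, add_comm, Real.exp_add,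
    mul_div_mul_left _ _ (ne_of_gt (Real.exp_pos _))]
end

section
/- In the finite-horizon KL-regularized MDP, let ℓ be the unique function satisfying, for all admissible transitions, β·(ℓ(s_t,a_t) − ℓ_ref(s_t,a_t)) = r(s_t,a_t) + γ(s_t,a_t)·β·(v_ℓ(s_{t+1}) − v_ref(s_{t+1})), where ℓ_ref are logits of π_ref (π_ref = softmax ℓ_ref) and v_ℓ, v_ref are the corresponding log-partitions. Then the softmax policy π_ℓ is the unique optimal policy for the KL-regularized objective. -/
lemma gibbs_term_le {x p : ℝ} (hp : 0 ≤ p) : p * (x - Real.log p) ≤ Real.exp x - p := by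
  rcases eq_or_lt_of_le hp with h | h
  · simp [← h]; positivity
  · have hx : 0 < Real.exp x / p := by positivity
    have := Real.log_le_sub_one_of_pos hx
    rw [Real.log_div (Real.exp_pos x).ne' h.ne', Real.log_exp] at this
    have := mul_le_mul_of_nonneg_left this hp
    rw [mul_sub, mul_sub, mul_div_cancel₀ _ h.ne', mul_one] at this
    linarith

lemma gibbs_term_lt {x p : ℝ} (hp : 0 ≤ p) (hne : p ≠ Real.exp x) :
    p * (x - Real.log p) < Real.exp x - p := by
  rcases eq_or_lt_of_le hp with h | h
  · simp [← h]; positivity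
  · have hx : 0 < Real.exp x / p := by positivity
    have hx1 : Real.exp x / p ≠ 1 := by
      intro h1
      exact hne ((div_eq_one_iff_eq h.ne').mp h1).symm
    have := Real.log_lt_sub_one_of_pos hx hx1
    rw [Real.log_div (Real.exp_pos x).ne' h.ne', Real.log_exp] at this
    have := mul_lt_mul_of_pos_left this h
    rw [mul_sub, mul_sub, mul_div_cancel₀ _ h.ne', mul_one] at this
    linarith

lemma gibbs {A : Type*} [Fintype A] [Nonempty A] (l p : A → ℝ)
    (h0 : ∀ a, 0 ≤ p a) (h1 : ∑ a, p a = 1) :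
    (∑ a, p a * (l a - Real.log (p a)) ≤ Real.log (∑ a, Real.exp (l a))) ∧
    (∑ a, p a * (l a - Real.log (p a)) = Real.log (∑ a, Real.exp (l a)) →
      ∀ a, p a = Real.exp (l a - Real.log (∑ a, Real.exp (l a)))) := by
  have hZ : 0 < ∑ a, Real.exp (l a) :=
    Finset.sum_pos (fun a _ => Real.exp_pos _) Finset.univ_nonempty
  set L := Real.log (∑ a, Real.exp (l a)) with hL
  have hsum : ∑ a, Real.exp (l a - L) = 1 := by
    simp only [Real.exp_sub, ← Finset.sum_div, hL, Real.exp_log hZ]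
    exact div_self hZ.ne'
  have hshift : ∀ a, p a * (l a - Real.log (p a)) =
      p a * ((l a - L) - Real.log (p a)) + p a * L := by
    intro a; ring
  have hkey : ∑ a, p a * (l a - Real.log (p a)) =
      (∑ a, p a * ((l a - L) - Real.log (p a))) + L := by
    rw [Finset.sum_congr rfl (fun a _ => hshift a), Finset.sum_add_distrib,
      ← Finset.sum_mul, h1, one_mul]
  constructor
  · rw [hkey]
    have hle : ∑ a, p a * ((l a - L) - Real.log (p a)) ≤
        ∑ a, (Real.exp (l a - L) - p a) :=
      Finset.sum_le_sum (fun a _ => gibbs_term_le (h0 a))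
    rw [Finset.sum_sub_distrib, hsum, h1] at hle
    linarith
  · intro heq a
    by_contra hne
    have hne' : p a ≠ Real.exp (l a - L) := hne
    have hlt : ∑ a, p a * ((l a - L) - Real.log (p a)) <
        ∑ a, (Real.exp (l a - L) - p a) := by
      apply Finset.sum_lt_sum (fun b _ => gibbs_term_le (h0 b))
      exact ⟨a, Finset.mem_univ a, gibbs_term_lt (h0 a) hne'⟩
    rw [Finset.sum_sub_distrib, hsum, h1] at hlt
    rw [hkey] at heq
    linarith


/-- in the finite-horizon KL-regularized MDP, let `ℓ` be the (unique)
function satisfying the shifted Bellman equation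
`β * (ℓ s a - ℓref s a) = r s a + γfun s a * β * (v_ℓ (step s a) - v_ref (step s a))`
on all transitions, where `πref` is the softmax of the reference logits `ℓref`.  Then the
softmax policy `π_ℓ` is the unique optimal policy for the KL-regularized objective: the
optimal value is `s ↦ β * (v_ℓ s - v_ref s)`, every policy's regularized value is
dominated by it, `π_ℓ` attains it, and any policy attaining it everywhere equals `π_ℓ`. -/
theorem stmt_7 {S A : Type*} [Fintype A] [Nonempty A]
    (step : S → A → S) (r : S → A → ℝ) (γfun : S → A → ℝ) (γd β : ℝ)
    (len : S → ℕ)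
    (hβ : 0 < β) (hγd : 0 < γd) (hγd1 : γd ≤ 1)
    (hγ : ∀ s a, γfun s a = 0 ∨ γfun s a = γd)
    (hterm : ∀ s a, γfun s a ≠ 0 → len (step s a) < len s)
    (ℓref : S → A → ℝ)
    (vref : S → ℝ) (hvref : ∀ s, vref s = Real.log (∑ a, Real.exp (ℓref s a)))
    (πref : S → A → ℝ) (hπref : ∀ s a, πref s a = Real.exp (ℓref s a - vref s))
    (ℓ : S → A → ℝ)
    (vℓ : S → ℝ) (hvℓ : ∀ s, vℓ s = Real.log (∑ a, Real.exp (ℓ s a)))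
    (πℓ : S → A → ℝ) (hπℓ : ∀ s a, πℓ s a = Real.exp (ℓ s a - vℓ s))
    (hℓ : ∀ s a, β * (ℓ s a - ℓref s a) =
      r s a + γfun s a * (β * (vℓ (step s a) - vref (step s a)))) :
    (∀ π : S → A → ℝ, (∀ s a, 0 ≤ π s a) → (∀ s, ∑ a, π s a = 1) →
      ∀ V : S → ℝ,
        (∀ s, V s = ∑ a, π s a *
          (r s a - β * Real.log (π s a / πref s a) + γfun s a * V (step s a))) →
        (∀ s, V s ≤ β * (vℓ s - vref s)) ∧
        ((∀ s, V s = β * (vℓ s - vref s)) → π = πℓ)) ∧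
    (∀ V : S → ℝ,
      (∀ s, V s = ∑ a, πℓ s a *
        (r s a - β * Real.log (πℓ s a / πref s a) + γfun s a * V (step s a))) →
      ∀ s, V s = β * (vℓ s - vref s)) := by
  -- proof
  -- key decomposition of the Bellman operator
  have key : ∀ (s : S) (p : A → ℝ), (∀ a, 0 ≤ p a) → (∑ a, p a = 1) → ∀ (W : S → ℝ),
      ∑ a, p a * (r s a - β * Real.log (p a / πref s a) + γfun s a * W (step s a))
      = β * (∑ a, p a * (ℓ s a - Real.log (p a))) - β * vref s
        + ∑ a, p a * (γfun s a * (W (step s a) - β * (vℓ (step s a) - vref (step s a)))) := by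
    intro s p h0 h1 W
    have hterm' : ∀ a,
        p a * (r s a - β * Real.log (p a / πref s a) + γfun s a * W (step s a))
        = β * (p a * (ℓ s a - Real.log (p a))) - β * vref s * p a
          + p a * (γfun s a * (W (step s a) - β * (vℓ (step s a) - vref (step s a)))) := by
      intro a
      rcases eq_or_lt_of_le (h0 a) with hpa | hpa
      · simp [← hpa]
      · have hπr : πref s a ≠ 0 := by rw [hπref]; exact (Real.exp_pos _).ne'
        have hlog : Real.log (p a / πref s a) = Real.log (p a) - (ℓref s a - vref s) := by
          rw [Real.log_div hpa.ne' hπr, hπref, Real.log_exp]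
        rw [hlog]
        have hra := hℓ s a
        nlinarith [hra]
    rw [Finset.sum_congr rfl (fun a _ => hterm' a), Finset.sum_add_distrib,
      Finset.sum_sub_distrib, ← Finset.mul_sum, ← Finset.mul_sum, h1, mul_one]
  have hZℓ : ∀ s, (0:ℝ) < ∑ a, Real.exp (ℓ s a) :=
    fun s => Finset.sum_pos (fun a _ => Real.exp_pos _) Finset.univ_nonempty
  have hπℓ0 : ∀ s a, 0 ≤ πℓ s a := fun s a => by rw [hπℓ]; exact (Real.exp_pos _).le
  have hπℓ1 : ∀ s, ∑ a, πℓ s a = 1 := by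
    intro s
    simp only [hπℓ, Real.exp_sub, ← Finset.sum_div, hvℓ, Real.exp_log (hZℓ s)]
    exact div_self (hZℓ s).ne'
  constructor
  · intro π hπ0 hπ1 V hV
    have hgibbs : ∀ s, ∑ a, π s a * (ℓ s a - Real.log (π s a)) ≤ vℓ s := by
      intro s; rw [hvℓ]; exact (gibbs (ℓ s) (π s) (hπ0 s) (hπ1 s)).1
    have bound : ∀ n s, len s < n → V s ≤ β * (vℓ s - vref s) := by
      intro n
      induction n with
      | zero => intro s hs; omega
      | succ n ih =>
        intro s hs
        rw [hV s, key s (π s) (hπ0 s) (hπ1 s) V]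
        have h3 : ∑ a, π s a *
            (γfun s a * (V (step s a) - β * (vℓ (step s a) - vref (step s a)))) ≤ 0 := by
          apply Finset.sum_nonpos
          intro a _
          rcases eq_or_ne (γfun s a) 0 with h | h
          · simp [h]
          · have hlt : len (step s a) < n := lt_of_lt_of_le (hterm s a h) (by omega)
            have := ih (step s a) hlt
            have hγpos : 0 ≤ γfun s a := by
              rcases hγ s a with h' | h'
              · exact le_of_eq h'.symm
              · rw [h']; exact hγd.le
            have h1 : V (step s a) - β * (vℓ (step s a) - vref (step s a)) ≤ 0 := by
              linarith
            exact mul_nonpos_of_nonneg_of_nonpos (hπ0 s a)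
              (mul_nonpos_of_nonneg_of_nonpos hγpos h1)
        have h1 : β * (∑ a, π s a * (ℓ s a - Real.log (π s a))) ≤ β * vℓ s :=
          mul_le_mul_of_nonneg_left (hgibbs s) hβ.le
        linarith
    have hbound : ∀ s, V s ≤ β * (vℓ s - vref s) := fun s => bound (len s + 1) s (by omega)
    refine ⟨hbound, ?_⟩
    intro hVeq
    funext s a
    have hk := key s (π s) (hπ0 s) (hπ1 s) V
    have h3 : ∑ x, π s x *
        (γfun s x * (V (step s x) - β * (vℓ (step s x) - vref (step s x)))) = 0 := by
      apply Finset.sum_eq_zero; intro x _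
      rw [hVeq (step s x)]; ring
    rw [← hV s, hVeq s, h3, add_zero] at hk
    have hG : ∑ x, π s x * (ℓ s x - Real.log (π s x)) = vℓ s := by
      have : β * (∑ x, π s x * (ℓ s x - Real.log (π s x))) = β * vℓ s := by linarith
      exact mul_left_cancel₀ hβ.ne' this
    rw [hvℓ s] at hG
    have := (gibbs (ℓ s) (π s) (hπ0 s) (hπ1 s)).2 hG a
    rw [this, hπℓ, hvℓ]
  · intro V hV
    have bound : ∀ n s, len s < n → V s = β * (vℓ s - vref s) := by
      intro n
      induction n with
      | zero => intro s hs; omega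
      | succ n ih =>
        intro s hs
        rw [hV s, key s (πℓ s) (hπℓ0 s) (hπℓ1 s) V]
        have h3 : ∑ a, πℓ s a *
            (γfun s a * (V (step s a) - β * (vℓ (step s a) - vref (step s a)))) = 0 := by
          apply Finset.sum_eq_zero; intro a _
          rcases eq_or_ne (γfun s a) 0 with h | h
          · simp [h]
          · have hlt : len (step s a) < n := lt_of_lt_of_le (hterm s a h) (by omega)
            rw [ih (step s a) hlt]; ring
        have hG : ∑ a, πℓ s a * (ℓ s a - Real.log (πℓ s a)) = vℓ s := by
          have : ∀ a, πℓ s a * (ℓ s a - Real.log (πℓ s a)) = πℓ s a * vℓ s := by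
            intro a
            rw [hπℓ, Real.log_exp]
            ring
          rw [Finset.sum_congr rfl (fun a _ => this a), ← Finset.sum_mul, hπℓ1, one_mul]
        rw [h3, hG]
        ring
    exact fun s => bound (len s + 1) s (by omega)
end

section
/- If ℓ satisfies the one-step shifted Bellman equation β·(ℓ(s_t,a_t) − ℓ_ref(s_t,a_t)) = r(s_t,a_t) + γ(s_t,a_t)·β·(v_ℓ(s_{t+1}) − v_ref(s_{t+1})) on all admissible transitions, then for every admissible trajectory (s_k,a_k)_{t ≤ k ≤ T} with γ(s_T,a_T) = 0, the multi-step consistency holds: β·(v_ℓ(s_t) − v_ref(s_t)) = Σ_{k=t}^{T} γ^{k−t}·(r(s_k,a_k) − β·ln(π_ℓ(a_k|s_k)/π_ref(a_k|s_k))). -/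
/-- if `ℓ` satisfies the one-step shifted Bellman equation
`β * (ℓ s a - ℓref s a) = r s a + γfun s a * β * (v_ℓ (step s a) - v_ref (step s a))`
on all transitions, then along every admissible trajectory `(s k, a k)` for
`t ≤ k ≤ T` (consecutive states related by `step`, non-terminal before `T`, i.e.
`γfun (s k) (a k) = γd` for `k < T`, and terminal at `T`: `γfun (s T) (a T) = 0`),
the multi-step consistency holds:
`β * (v_ℓ (s t) - v_ref (s t)) = ∑_{k=t}^{T} γd^{k-t} * (r (s k) (a k) - β * ln (π_ℓ (a k | s k) / πref (a k | s k)))`. -/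
theorem stmt_8 {S A : Type*} [Fintype A] [Nonempty A]
    (step : S → A → S) (r : S → A → ℝ) (γfun : S → A → ℝ) (γd β : ℝ)
    (hβ : 0 < β) (hγd : 0 < γd) (hγd1 : γd ≤ 1)
    (hγ : ∀ s a, γfun s a = 0 ∨ γfun s a = γd)
    (ℓref : S → A → ℝ)
    (vref : S → ℝ) (hvref : ∀ s, vref s = Real.log (∑ a, Real.exp (ℓref s a)))
    (πref : S → A → ℝ) (hπref : ∀ s a, πref s a = Real.exp (ℓref s a - vref s))
    (ℓ : S → A → ℝ)
    (vℓ : S → ℝ) (hvℓ : ∀ s, vℓ s = Real.log (∑ a, Real.exp (ℓ s a)))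
    (πℓ : S → A → ℝ) (hπℓ : ∀ s a, πℓ s a = Real.exp (ℓ s a - vℓ s))
    (hℓ : ∀ s a, β * (ℓ s a - ℓref s a) =
      r s a + γfun s a * (β * (vℓ (step s a) - vref (step s a)))) :
    ∀ (s : ℕ → S) (a : ℕ → A) (t T : ℕ), t ≤ T →
      (∀ k, s (k + 1) = step (s k) (a k)) →
      (∀ k, t ≤ k → k < T → γfun (s k) (a k) = γd) →
      γfun (s T) (a T) = 0 →
      β * (vℓ (s t) - vref (s t)) =
        ∑ k ∈ Finset.Icc t T, γd ^ (k - t) *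
          (r (s k) (a k) - β * Real.log (πℓ (s k) (a k) / πref (s k) (a k))) := by

  intro s a t T htT hstep hmid hterm
  have hlog : ∀ s a, Real.log (πℓ s a / πref s a) =
      (ℓ s a - vℓ s) - (ℓref s a - vref s) := by
    intro s a
    rw [hπℓ, hπref, ← Real.exp_sub, Real.log_exp]
  obtain ⟨n, hn⟩ : ∃ n, T = t + n := ⟨T - t, (Nat.add_sub_cancel' htT).symm⟩
  subst hn
  clear htT
  induction n generalizing t with
  | zero =>
    simp only [Nat.add_zero] at hmid hterm ⊢
    rw [Finset.Icc_self, Finset.sum_singleton, hlog]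
    have h0 := hℓ (s t) (a t)
    rw [hterm] at h0
    simp only [Nat.sub_self, pow_zero, one_mul]
    linear_combination h0
  | succ n ih =>
    have hins : Finset.Icc t (t + (n + 1)) =
        insert t (Finset.Icc (t + 1) (t + (n + 1))) := by
      ext k
      simp only [Finset.mem_Icc, Finset.mem_insert]
      omega
    rw [hins, Finset.sum_insert (by simp [Finset.mem_Icc])]
    have hsum : ∑ k ∈ Finset.Icc (t + 1) (t + (n + 1)), γd ^ (k - t) *
          (r (s k) (a k) - β * Real.log (πℓ (s k) (a k) / πref (s k) (a k)))
        = γd * ∑ k ∈ Finset.Icc (t + 1) (t + (n + 1)), γd ^ (k - (t + 1)) *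
          (r (s k) (a k) - β * Real.log (πℓ (s k) (a k) / πref (s k) (a k))) := by
      rw [Finset.mul_sum]
      refine Finset.sum_congr rfl fun k hk => ?_
      rw [Finset.mem_Icc] at hk
      have : k - t = (k - (t + 1)) + 1 := by omega
      rw [this, pow_succ]
      ring
    have hih := ih (t + 1) (fun k hk1 hk2 => hmid k (by omega) (by omega))
      (by rw [show t + 1 + n = t + (n + 1) from by omega]; exact hterm)
    rw [show t + 1 + n = t + (n + 1) from by omega] at hih
    rw [hsum, ← hih]
    have h0 := hℓ (s t) (a t)
    rw [hmid t le_rfl (by omega), ← hstep t] at h0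
    rw [hlog]
    simp only [Nat.sub_self, pow_zero, one_mul]
    linear_combination h0
end

section
/- Conversely, if f : S×A → ℝ satisfies the multi-step consistency β·(v_f(s_t) − v_ref(s_t)) = Σ_{k=t}^{T} γ^{k−t}·(r(s_k,a_k) − β·ln(π_f(a_k|s_k)/π_ref(a_k|s_k))) for every admissible trajectory and every starting index t, then f satisfies the one-step shifted Bellman equation β·(f(s_t,a_t) − ℓ_ref(s_t,a_t)) = r(s_t,a_t) + γ(s_t,a_t)·β·(v_f(s_{t+1}) − v_ref(s_{t+1})) on all admissible transitions; hence f equals the unique Bellman fixed point and π_f is the unique optimal policy. -/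
/-- converse of the multi-step consistency: if `f : S × A → ℝ` satisfies
the multi-step consistency
`β * (v_f (s t) - v_ref (s t)) = ∑_{k=t}^{T} γd^{k-t} * (r (s k) (a k) - β * ln (π_f (a k|s k)/πref (a k|s k)))`
for every admissible trajectory and every starting index `t`, and every state-action pair
can be extended to an admissible trajectory reaching a terminal pair, then `f` satisfies
the one-step shifted Bellman equation
`β * (f s a - ℓref s a) = r s a + γfun s a * β * (v_f (step s a) - v_ref (step s a))`
on all transitions; hence `f` equals the unique fixed point of that equation (any other
solution coincides with `f`). -/
theorem stmt_9 {S A : Type*} [Fintype A] [Nonempty A]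
    (step : S → A → S) (r : S → A → ℝ) (γfun : S → A → ℝ) (γd β : ℝ)
    (len : S → ℕ)
    (hβ : 0 < β) (hγd : 0 < γd) (hγd1 : γd ≤ 1)
    (hγ : ∀ s a, γfun s a = 0 ∨ γfun s a = γd)
    (hterm : ∀ s a, γfun s a ≠ 0 → len (step s a) < len s)
    (ℓref : S → A → ℝ)
    (vref : S → ℝ) (hvref : ∀ s, vref s = Real.log (∑ a, Real.exp (ℓref s a)))
    (πref : S → A → ℝ) (hπref : ∀ s a, πref s a = Real.exp (ℓref s a - vref s))
    (f : S → A → ℝ)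
    (vf : S → ℝ) (hvf : ∀ s, vf s = Real.log (∑ a, Real.exp (f s a)))
    (πf : S → A → ℝ) (hπf : ∀ s a, πf s a = Real.exp (f s a - vf s))
    (hext : ∀ s0 a0, ∃ (s : ℕ → S) (a : ℕ → A) (T : ℕ),
      s 0 = s0 ∧ a 0 = a0 ∧ (∀ k, s (k + 1) = step (s k) (a k)) ∧
      (∀ k, k < T → γfun (s k) (a k) = γd) ∧ γfun (s T) (a T) = 0)
    (hms : ∀ (s : ℕ → S) (a : ℕ → A) (T : ℕ),
      (∀ k, s (k + 1) = step (s k) (a k)) →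
      (∀ k, k < T → γfun (s k) (a k) = γd) →
      γfun (s T) (a T) = 0 →
      ∀ t, t ≤ T →
        β * (vf (s t) - vref (s t)) =
          ∑ k ∈ Finset.Icc t T, γd ^ (k - t) *
            (r (s k) (a k) - β * Real.log (πf (s k) (a k) / πref (s k) (a k)))) :
    (∀ s a, β * (f s a - ℓref s a) =
      r s a + γfun s a * (β * (vf (step s a) - vref (step s a)))) ∧
    (∀ g : S → A → ℝ,
      (∀ s a, β * (g s a - ℓref s a) =
        r s a + γfun s a *
          (β * (Real.log (∑ a', Real.exp (g (step s a) a')) - vref (step s a)))) →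
      g = f) := by
  have hlog : ∀ s a, Real.log (πf s a / πref s a) =
      (f s a - vf s) - (ℓref s a - vref s) := by
    intro s a
    rw [hπf, hπref, ← Real.exp_sub, Real.log_exp]
  have hbell : ∀ s a, β * (f s a - ℓref s a) =
      r s a + γfun s a * (β * (vf (step s a) - vref (step s a))) := by
    intro s0 a0
    obtain ⟨s, a, T, hs0, ha0, hstep, hmid, hend⟩ := hext s0 a0
    rcases hγ s0 a0 with hz | hg
    · -- terminal case: T = 0
      have hT : T = 0 := by
        by_contra h
        have := hmid 0 (Nat.pos_of_ne_zero h)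
        rw [hs0, ha0, hz] at this
        exact hγd.ne' this.symm
      have h0 := hms s a T hstep hmid hend 0 (Nat.zero_le T)
      rw [hT, Finset.Icc_self, Finset.sum_singleton, hs0, ha0] at h0
      rw [hlog] at h0
      rw [hz]
      simp only [Nat.sub_zero, pow_zero, one_mul] at h0
      linear_combination h0
    · -- non-terminal case: T ≥ 1
      have hT : 1 ≤ T := by
        rcases Nat.eq_zero_or_pos T with h | h
        · exfalso
          rw [h, hs0, ha0, hg] at hend
          exact hγd.ne' hend
        · exact h
      have h0 := hms s a T hstep hmid hend 0 (Nat.zero_le T)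
      have h1 := hms s a T hstep hmid hend 1 hT
      have hins : Finset.Icc 0 T = insert 0 (Finset.Icc 1 T) := by
        ext k; simp [Finset.mem_Icc]; omega
      rw [hins, Finset.sum_insert (by simp)] at h0
      have hfac : ∑ k ∈ Finset.Icc 1 T, γd ^ (k - 0) *
            (r (s k) (a k) - β * Real.log (πf (s k) (a k) / πref (s k) (a k)))
          = γd * ∑ k ∈ Finset.Icc 1 T, γd ^ (k - 1) *
            (r (s k) (a k) - β * Real.log (πf (s k) (a k) / πref (s k) (a k))) := by
        rw [Finset.mul_sum]
        refine Finset.sum_congr rfl fun k hk => ?_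
        have hk1 : 1 ≤ k := (Finset.mem_Icc.mp hk).1
        have hpow : γd ^ (k - 0) = γd * γd ^ (k - 1) := by
          conv_lhs => rw [show k - 0 = (k - 1) + 1 by omega]
          rw [pow_succ]; ring
        rw [hpow]; ring
      rw [hfac, ← h1] at h0
      have hstep1 : s 1 = step s0 a0 := by rw [hstep 0, hs0, ha0]
      rw [hs0, ha0, hstep1, hlog] at h0
      rw [hg]
      simp only [Nat.sub_zero, pow_zero, one_mul] at h0
      linear_combination h0
  refine ⟨hbell, ?_⟩
  intro g hg
  have key : ∀ n s, len s ≤ n → ∀ a, g s a = f s a := by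
    intro n
    induction n with
    | zero =>
      intro s hs a
      have hz : γfun s a = 0 := by
        by_contra h
        have := hterm s a h
        omega
      have h1 := hg s a
      have h2 := hbell s a
      rw [hz] at h1 h2
      have := mul_left_cancel₀ hβ.ne' (by linarith : β * (g s a - ℓref s a) = β * (f s a - ℓref s a))
      linarith
    | succ n ih =>
      intro s hs a
      rcases hγ s a with hz | hgd
      · have h1 := hg s a
        have h2 := hbell s a
        rw [hz] at h1 h2
        have := mul_left_cancel₀ hβ.ne' (by linarith : β * (g s a - ℓref s a) = β * (f s a - ℓref s a))
        linarith
      · have hne : γfun s a ≠ 0 := by rw [hgd]; exact hγd.ne'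
        have hlt : len (step s a) ≤ n := by have := hterm s a hne; omega
        have hgf := ih (step s a) hlt
        have hsum : Real.log (∑ a', Real.exp (g (step s a) a')) = vf (step s a) := by
          rw [hvf]
          congr 1
          exact Finset.sum_congr rfl fun a' _ => by rw [hgf a']
        have h1 := hg s a
        rw [hsum] at h1
        have h2 := hbell s a
        have := mul_left_cancel₀ hβ.ne' (by linarith : β * (g s a - ℓref s a) = β * (f s a - ℓref s a))
        linarith
  funext s a
  exact key (len s) s le_rfl a
end

section
/- The sequence-level loss L(ℓ) = E_{(x,y)∼D}[(R(x,y) − β·ln(π_ℓ(y|x)/π_ref(y|x)) − β·(v_ℓ(x) − v_ref(x)))²] is nonnegative, attains the value 0 (e.g., at the shifted Bellman fixed point), and any global minimizer ℓ with L(ℓ) = 0 on a dataset D whose support equals supp(ρ·π_ref) induces the sequence-level policy π_ℓ(y|x) ∝ π_ref(y|x)·exp(R(x,y)/β), which is the unique maximizer of J(π) = E_{x∼ρ} E_{y∼π(·|x)}[R(x,y)] − β·E_{x∼ρ}[KL(π(·|x) ∥ π_ref(·|x))]. -/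
/-!
The minimizer of the KL-regularized objective at a state is the Gibbs tilt
`πref · exp (R / β) / Z`: writing `log (p / πref) = log (p / gibbs) + R / β - log Z` turns the
objective into `β log Z - β KL(p ‖ gibbs)`, so Gibbs' inequality gives the bound `β log Z` and the
uniqueness. A zero of the loss kills every residual on the support of `ρ · πref`, so
`log (π / πref) = (R - V) / β` there; normalisation of `π` then forces `exp (V / β) = Z`,
i.e. `π` is the Gibbs tilt.
-/

open Finset InformationTheory

section Gibbs

open Real

variable {Y : Type*} [Fintype Y]

theorem sum_mul_log_div_eq_sum_mul_klFun {p q : Y → ℝ} (hq : ∀ y, 0 < q y)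
    (hsum : ∑ y, p y = ∑ y, q y) :
    ∑ y, p y * log (p y / q y) = ∑ y, q y * klFun (p y / q y) := by
  have hterm : ∀ y, q y * klFun (p y / q y) = p y * log (p y / q y) + (q y - p y) := by
    intro y
    have hqy := (hq y).ne'
    rw [klFun_apply]
    field_simp
    ring
  simp_rw [hterm, sum_add_distrib, sum_sub_distrib, hsum, sub_self, add_zero]

theorem sum_mul_log_div_nonneg {p q : Y → ℝ} (hp : ∀ y, 0 ≤ p y) (hq : ∀ y, 0 < q y)
    (hsum : ∑ y, p y = ∑ y, q y) :
    0 ≤ ∑ y, p y * log (p y / q y) := by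
  rw [sum_mul_log_div_eq_sum_mul_klFun hq hsum]
  exact sum_nonneg fun y _ => mul_nonneg (hq y).le (klFun_nonneg (div_nonneg (hp y) (hq y).le))

theorem eq_of_sum_mul_log_div_eq_zero {p q : Y → ℝ} (hp : ∀ y, 0 ≤ p y) (hq : ∀ y, 0 < q y)
    (hsum : ∑ y, p y = ∑ y, q y) (h : ∑ y, p y * log (p y / q y) = 0) :
    p = q := by
  have hklFun_nonneg : ∀ y, 0 ≤ klFun (p y / q y) :=
    fun y => klFun_nonneg (div_nonneg (hp y) (hq y).le)
  rw [sum_mul_log_div_eq_sum_mul_klFun hq hsum,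
    sum_eq_zero_iff_of_nonneg fun y _ => mul_nonneg (hq y).le (hklFun_nonneg y)] at h
  funext y
  have hy := h y (mem_univ y)
  rwa [mul_eq_zero, or_iff_right (hq y).ne', klFun_eq_zero_iff (div_nonneg (hp y) (hq y).le),
    div_eq_one_iff_eq (hq y).ne'] at hy

variable (q r : Y → ℝ) (β : ℝ)

noncomputable def partitionFn : ℝ := ∑ y, q y * exp (r y / β)

noncomputable def gibbs_s12 (y : Y) : ℝ := q y * exp (r y / β) / partitionFn q r β

noncomputable def regObjective (p : Y → ℝ) : ℝ :=
  (∑ y, p y * r y) - β * ∑ y, p y * log (p y / q y)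

variable {q r β} [Nonempty Y]

theorem partitionFn_pos (hq : ∀ y, 0 < q y) : 0 < partitionFn q r β :=
  sum_pos (fun y _ => mul_pos (hq y) (exp_pos _)) univ_nonempty

theorem gibbs_pos (hq : ∀ y, 0 < q y) (y : Y) : 0 < gibbs_s12 q r β y :=
  div_pos (mul_pos (hq y) (exp_pos _)) (partitionFn_pos hq)

theorem sum_gibbs (hq : ∀ y, 0 < q y) : ∑ y, gibbs_s12 q r β y = 1 := by
  simp only [gibbs_s12]
  rw [← sum_div]
  exact div_self (partitionFn_pos hq).ne'

theorem log_gibbs_div (hq : ∀ y, 0 < q y) (y : Y) :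
    log (gibbs_s12 q r β y / q y) = r y / β - log (partitionFn q r β) := by
  rw [gibbs_s12, mul_div_assoc, mul_div_cancel_left₀ _ (hq y).ne',
    log_div (exp_pos _).ne' (partitionFn_pos hq).ne', log_exp]

theorem regObjective_eq_sub_kl (hβ : β ≠ 0) (hq : ∀ y, 0 < q y) {p : Y → ℝ}
    (hp : ∀ y, 0 ≤ p y) (hp1 : ∑ y, p y = 1) :
    regObjective q r β p =
      β * log (partitionFn q r β) - β * ∑ y, p y * log (p y / gibbs_s12 q r β y) := by
  have hterm : ∀ y, p y * log (p y / q y) =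
      p y * log (p y / gibbs_s12 q r β y) + (p y * r y / β - p y * log (partitionFn q r β)) := by
    intro y
    rcases (hp y).eq_or_lt with hpy | hpy
    · simp [← hpy]
    · rw [mul_div_assoc, ← mul_sub, ← log_gibbs_div hq, ← mul_add,
        ← log_mul (div_pos hpy (gibbs_pos hq y)).ne' (div_pos (gibbs_pos hq y) (hq y)).ne',
        div_mul_div_cancel₀ (gibbs_pos hq y).ne']
  have hsum : ∑ y, p y * log (p y / q y) = ∑ y, p y * log (p y / gibbs_s12 q r β y) +
      ((∑ y, p y * r y) / β - log (partitionFn q r β)) := by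
    rw [sum_congr rfl fun y _ => hterm y, sum_add_distrib, sum_sub_distrib, ← sum_div,
      ← sum_mul, hp1, one_mul]
  rw [regObjective, hsum]
  field_simp
  ring

theorem regObjective_le (hβ : 0 < β) (hq : ∀ y, 0 < q y) {p : Y → ℝ}
    (hp : ∀ y, 0 ≤ p y) (hp1 : ∑ y, p y = 1) :
    regObjective q r β p ≤ β * log (partitionFn q r β) := by
  rw [regObjective_eq_sub_kl hβ.ne' hq hp hp1, sub_le_self_iff]
  exact mul_nonneg hβ.le (sum_mul_log_div_nonneg hp (gibbs_pos hq) (by rw [hp1, sum_gibbs hq]))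

theorem eq_gibbs_of_regObjective_eq (hβ : 0 < β) (hq : ∀ y, 0 < q y) {p : Y → ℝ}
    (hp : ∀ y, 0 ≤ p y) (hp1 : ∑ y, p y = 1)
    (h : regObjective q r β p = β * log (partitionFn q r β)) :
    p = gibbs_s12 q r β := by
  rw [regObjective_eq_sub_kl hβ.ne' hq hp hp1, sub_eq_self, mul_eq_zero,
    or_iff_right hβ.ne'] at h
  exact eq_of_sum_mul_log_div_eq_zero hp (gibbs_pos hq) (by rw [hp1, sum_gibbs hq]) h

theorem regObjective_gibbs (hβ : 0 < β) (hq : ∀ y, 0 < q y) :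
    regObjective q r β (gibbs_s12 q r β) = β * log (partitionFn q r β) := by
  have hkl : ∑ y, gibbs_s12 q r β y * log (gibbs_s12 q r β y / gibbs_s12 q r β y) = 0 :=
    sum_eq_zero fun y _ => by rw [div_self (gibbs_pos hq y).ne', log_one, mul_zero]
  rw [regObjective_eq_sub_kl hβ.ne' hq (fun y => (gibbs_pos hq y).le) (sum_gibbs hq), hkl,
    mul_zero, sub_zero]

theorem residual_gibbs (hβ : β ≠ 0) (hq : ∀ y, 0 < q y) (y : Y) :
    r y - β * log (gibbs_s12 q r β y / q y) - β * log (partitionFn q r β) = 0 := by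
  rw [log_gibbs_div hq]
  field_simp
  ring

theorem eq_gibbs_of_residual_eq_zero (hβ : β ≠ 0) (hq : ∀ y, 0 < q y) {p : Y → ℝ}
    (hp : ∀ y, 0 < p y) (hp1 : ∑ y, p y = 1) {c : ℝ}
    (h : ∀ y, r y - β * log (p y / q y) - c = 0) :
    p = gibbs_s12 q r β := by
  have hp_eq : ∀ y, p y = q y * exp (r y / β) * exp (-c / β) := by
    intro y
    have hlog : log (p y / q y) = r y / β + -c / β := by
      field_simp
      linarith [h y]
    rw [mul_assoc, ← exp_add, ← hlog, exp_log (div_pos (hp y) (hq y)),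
      mul_div_cancel₀ _ (hq y).ne']
  have hnorm : partitionFn q r β * exp (-c / β) = 1 := by
    rw [partitionFn, sum_mul, ← hp1]
    exact sum_congr rfl fun y _ => (hp_eq y).symm
  funext y
  rw [hp_eq, gibbs_s12, eq_div_iff (partitionFn_pos hq).ne', mul_assoc, mul_comm (exp _), hnorm,
    mul_one]

end Gibbs

section WeightedSquares

variable {X Y : Type*} [Fintype X] [Fintype Y] {w : X → Y → ℝ}

theorem sum_sum_mul_sq_nonneg (hw : ∀ x y, 0 ≤ w x y) (f : X → Y → ℝ) :
    0 ≤ ∑ x, ∑ y, w x y * f x y ^ 2 :=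
  sum_nonneg fun x _ => sum_nonneg fun y _ => mul_nonneg (hw x y) (sq_nonneg _)

theorem eq_zero_of_sum_sum_mul_sq_eq_zero (hw : ∀ x y, 0 ≤ w x y) {f : X → Y → ℝ}
    (h : ∑ x, ∑ y, w x y * f x y ^ 2 = 0) {x : X} {y : Y} (hxy : 0 < w x y) :
    f x y = 0 := by
  have hx := (sum_eq_zero_iff_of_nonneg fun x _ =>
    sum_nonneg fun y _ => mul_nonneg (hw x y) (sq_nonneg (f x y))).1 h x (mem_univ x)
  have hxy' := (sum_eq_zero_iff_of_nonneg fun y _ =>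
    mul_nonneg (hw x y) (sq_nonneg (f x y))).1 hx y (mem_univ y)
  exact pow_eq_zero_iff two_ne_zero |>.1 ((mul_eq_zero.1 hxy').resolve_left hxy.ne')

end WeightedSquares

theorem stmt_12_general {X Y : Type*} [Fintype X] [Fintype Y] [Nonempty Y]
    (ρ : X → ℝ) (hρ : ∀ x, 0 ≤ ρ x)
    (πref : X → Y → ℝ) (hπref : ∀ x y, 0 < πref x y)
    (R : X → Y → ℝ) (β : ℝ) (hβ : 0 < β)
    (D : X → Y → ℝ) (hD : ∀ x y, 0 ≤ D x y)
    (hsupp : ∀ x y, 0 < D x y ↔ 0 < ρ x * πref x y)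
    (L : (X → Y → ℝ) → (X → ℝ) → ℝ)
    (hL : ∀ π V, L π V = ∑ x, ∑ y, D x y *
      (R x y - β * Real.log (π x y / πref x y) - V x) ^ 2)
    (J : (X → Y → ℝ) → ℝ)
    (hJ : ∀ π, J π = ∑ x, ρ x *
      ((∑ y, π x y * R x y) - β * ∑ y, π x y * Real.log (π x y / πref x y))) :
    (∀ π V, 0 ≤ L π V) ∧
    (∃ (π : X → Y → ℝ) (V : X → ℝ), (∀ x y, 0 < π x y) ∧
      (∀ x, ∑ y, π x y = 1) ∧ L π V = 0) ∧
    (∀ (π : X → Y → ℝ) (V : X → ℝ), (∀ x y, 0 < π x y) →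
      (∀ x, ∑ y, π x y = 1) → L π V = 0 →
      (∀ x y, 0 < ρ x →
        π x y = πref x y * Real.exp (R x y / β) /
          ∑ y', πref x y' * Real.exp (R x y' / β)) ∧
      (∀ π' : X → Y → ℝ, (∀ x y, 0 ≤ π' x y) → (∀ x, ∑ y, π' x y = 1) →
        J π' ≤ J π ∧ (J π' = J π → ∀ x y, 0 < ρ x → π' x y = π x y))) := by
  have hJ' : ∀ π, J π = ∑ x, ρ x * regObjective (πref x) (R x) β (π x) := hJ
  refine ⟨fun π V => hL π V ▸ sum_sum_mul_sq_nonneg hD _,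
    ⟨fun x => gibbs_s12 (πref x) (R x) β, fun x => β * Real.log (partitionFn (πref x) (R x) β),
      fun x => gibbs_pos (hπref x), fun x => sum_gibbs (hπref x), ?_⟩, ?_⟩
  · rw [hL]
    simp only [residual_gibbs hβ.ne' (hπref _), zero_pow two_ne_zero, mul_zero, sum_const_zero]
  intro π V hπ hπ1 hL0
  have hπ_gibbs : ∀ x, 0 < ρ x → π x = gibbs_s12 (πref x) (R x) β := fun x hx =>
    eq_gibbs_of_residual_eq_zero hβ.ne' (hπref x) (hπ x) (hπ1 x) fun y =>
      eq_zero_of_sum_sum_mul_sq_eq_zero hD (hL π V ▸ hL0)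
        ((hsupp x y).2 (mul_pos hx (hπref x y)))
  have hle : ∀ π' : X → Y → ℝ, (∀ x y, 0 ≤ π' x y) → (∀ x, ∑ y, π' x y = 1) → ∀ x,
      ρ x * regObjective (πref x) (R x) β (π' x) ≤ ρ x * regObjective (πref x) (R x) β (π x) := by
    intro π' hπ' hπ'1 x
    rcases (hρ x).eq_or_lt with hx | hx
    · simp [← hx]
    · rw [hπ_gibbs x hx, regObjective_gibbs hβ (hπref x)]
      exact mul_le_mul_of_nonneg_left (regObjective_le hβ (hπref x) (hπ' x) (hπ'1 x)) hx.le
  refine ⟨fun x y hx => congrFun (hπ_gibbs x hx) y, fun π' hπ' hπ'1 =>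
    ⟨(hJ' π').trans_le ((sum_le_sum fun x _ => hle π' hπ' hπ'1 x).trans_eq (hJ' π).symm),
      fun hJeq x y hx => ?_⟩⟩
  rw [hJ', hJ'] at hJeq
  have hx_eq := (sum_eq_sum_iff_of_le fun x _ => hle π' hπ' hπ'1 x).1 hJeq x (mem_univ x)
  rw [mul_right_inj' hx.ne', hπ_gibbs x hx, regObjective_gibbs hβ (hπref x)] at hx_eq
  rw [eq_gibbs_of_regObjective_eq hβ (hπref x) (hπ' x) (hπ'1 x) hx_eq, hπ_gibbs x hx]

/-- the sequence-level loss
`L(π, V) = E_{(x,y)∼D}[(R x y - β * ln (π(y|x)/πref(y|x)) - V x)²]`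
(where `V x` stands for `β * (v_ℓ x - v_ref x)`, the log-partition difference of the
policy's logits) is nonnegative, attains the value `0`, and any global minimizer with
zero loss, on a dataset `D` whose support equals `supp(ρ · πref)`, induces the policy
`π(y|x) = πref(y|x) * exp (R x y / β) / Z x`, which is the unique maximizer of the
KL-regularized objective `J`. -/
theorem stmt_12 {X Y : Type*} [Fintype X] [Fintype Y] [Nonempty Y]
    (ρ : X → ℝ) (hρ : ∀ x, 0 ≤ ρ x) (hρsum : ∑ x, ρ x = 1)
    (πref : X → Y → ℝ) (hπref : ∀ x y, 0 < πref x y)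
    (hπrefsum : ∀ x, ∑ y, πref x y = 1)
    (R : X → Y → ℝ) (β : ℝ) (hβ : 0 < β)
    (D : X → Y → ℝ) (hD : ∀ x y, 0 ≤ D x y) (hDsum : ∑ x, ∑ y, D x y = 1)
    (hsupp : ∀ x y, 0 < D x y ↔ 0 < ρ x * πref x y)
    (L : (X → Y → ℝ) → (X → ℝ) → ℝ)
    (hL : ∀ π V, L π V = ∑ x, ∑ y, D x y *
      (R x y - β * Real.log (π x y / πref x y) - V x) ^ 2)
    (J : (X → Y → ℝ) → ℝ)
    (hJ : ∀ π, J π = ∑ x, ρ x *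
      ((∑ y, π x y * R x y) - β * ∑ y, π x y * Real.log (π x y / πref x y))) :
    (∀ π V, 0 ≤ L π V) ∧
    (∃ (π : X → Y → ℝ) (V : X → ℝ), (∀ x y, 0 < π x y) ∧
      (∀ x, ∑ y, π x y = 1) ∧ L π V = 0) ∧
    (∀ (π : X → Y → ℝ) (V : X → ℝ), (∀ x y, 0 < π x y) →
      (∀ x, ∑ y, π x y = 1) → L π V = 0 →
      (∀ x y, 0 < ρ x →
        π x y = πref x y * Real.exp (R x y / β) /
          ∑ y', πref x y' * Real.exp (R x y' / β)) ∧
      (∀ π' : X → Y → ℝ, (∀ x y, 0 ≤ π' x y) → (∀ x, ∑ y, π' x y = 1) →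
        J π' ≤ J π ∧ (J π' = J π → ∀ x y, 0 < ρ x → π' x y = π x y))) :=
  stmt_12_general ρ hρ πref hπref R β hβ D hD hsupp L hL J hJ
end

section
/- DRO value identity: under the support condition supp(D) = supp(ρ·π_ref), any pair (π,V) with π(y|x) > 0 on the support that makes the residual R(x,y) − β·ln(π(y|x)/π_ref(y|x)) − V(x) vanish for all (x,y) in the support satisfies V(x) = β·ln Σ_{y : π_ref(y|x)>0} π_ref(y|x)·exp(R(x,y)/β) and π(y|x) = π_ref(y|x)·exp((R(x,y) − V(x))/β), the unique KL-regularized optimum. -/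
open Finset

lemma gibbs_aux {Y : Type*} [Fintype Y] (β : ℝ) (hβ : 0 < β)
    (q p p' r : Y → ℝ) (v : ℝ)
    (hq : ∀ y, 0 ≤ q y)
    (hp : ∀ y, 0 ≤ p y) (hps : ∑ y, p y = 1)
    (hp' : ∀ y, 0 ≤ p' y) (hp's : ∑ y, p' y = 1)
    (habs : ∀ y, q y = 0 → p y = 0) (habs' : ∀ y, q y = 0 → p' y = 0)
    (hpos : ∀ y, 0 < q y → 0 < p y)
    (hr : ∀ y, 0 < q y → r y = v + β * Real.log (p y / q y)) :
    ((∑ y, p' y * r y) - β * ∑ y, p' y * Real.log (p' y / q y)) ≤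
      ((∑ y, p y * r y) - β * ∑ y, p y * Real.log (p y / q y)) ∧
    (((∑ y, p' y * r y) - β * ∑ y, p' y * Real.log (p' y / q y)) =
      ((∑ y, p y * r y) - β * ∑ y, p y * Real.log (p y / q y)) → ∀ y, p' y = p y) := by
  set T : Y → ℝ := fun y => p' y * Real.log (p y / p' y) with hT
  have key : ((∑ y, p' y * r y) - β * ∑ y, p' y * Real.log (p' y / q y)) -
      ((∑ y, p y * r y) - β * ∑ y, p y * Real.log (p y / q y)) = β * ∑ y, T y := by
    have hpt : ∀ y, (p' y * r y - β * (p' y * Real.log (p' y / q y))) -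
        (p y * r y - β * (p y * Real.log (p y / q y))) = v * (p' y - p y) + β * T y := by
      intro y
      rcases (hq y).lt_or_eq with hqy | hqy
      · have hpy := hpos y hqy
        have hry := hr y hqy
        rcases (hp' y).lt_or_eq with hpy' | hpy'
        · rw [hry, hT]
          simp only
          rw [Real.log_div (ne_of_gt hpy) (ne_of_gt hqy),
              Real.log_div (ne_of_gt hpy') (ne_of_gt hqy),
              Real.log_div (ne_of_gt hpy) (ne_of_gt hpy')]
          ring
        · have h0 : p' y = 0 := hpy'.symm
          rw [hry]
          simp only [hT, h0]
          ring
      · have h1 := habs y hqy.symm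
        have h2 := habs' y hqy.symm
        simp [hT, h1, h2]
    calc ((∑ y, p' y * r y) - β * ∑ y, p' y * Real.log (p' y / q y)) -
        ((∑ y, p y * r y) - β * ∑ y, p y * Real.log (p y / q y))
        = ∑ y, ((p' y * r y - β * (p' y * Real.log (p' y / q y))) -
        (p y * r y - β * (p y * Real.log (p y / q y)))) := by
          rw [Finset.sum_sub_distrib]
          simp_rw [Finset.sum_sub_distrib, Finset.mul_sum]
      _ = ∑ y, (v * (p' y - p y) + β * T y) := by simp_rw [hpt]
      _ = β * ∑ y, T y := by
          rw [Finset.sum_add_distrib, ← Finset.mul_sum, ← Finset.mul_sum,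
            Finset.sum_sub_distrib, hps, hp's]
          ring
  have hTle : ∀ y, T y ≤ p y - p' y := by
    intro y
    rcases (hp' y).lt_or_eq with hpy' | hpy'
    · have hqy : 0 < q y := by
        rcases (hq y).lt_or_eq with h | h
        · exact h
        · exact absurd (habs' y h.symm) (ne_of_gt hpy')
      have hpy := hpos y hqy
      have hlog : Real.log (p y / p' y) ≤ p y / p' y - 1 :=
        Real.log_le_sub_one_of_pos (div_pos hpy hpy')
      have h2 := mul_le_mul_of_nonneg_left hlog (le_of_lt hpy')
      calc T y ≤ p' y * (p y / p' y - 1) := h2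
        _ = p y - p' y := by field_simp
    · simp [hT, ← hpy', hp y]
  have hsum : ∑ y, T y ≤ 0 := by
    calc ∑ y, T y ≤ ∑ y, (p y - p' y) := Finset.sum_le_sum (fun y _ => hTle y)
      _ = 0 := by rw [Finset.sum_sub_distrib, hps, hp's]; ring
  constructor
  · nlinarith
  · intro heq
    have h0 : ∑ y, T y = 0 := by
      have hb : β * ∑ y, T y = 0 := by linarith
      exact (mul_eq_zero.mp hb).resolve_left (ne_of_gt hβ)
    have hsum2 : ∑ y, T y = ∑ y, (p y - p' y) := by
      rw [h0, Finset.sum_sub_distrib, hps, hp's]; ring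
    have hall : ∀ y ∈ Finset.univ, T y = p y - p' y :=
      (Finset.sum_eq_sum_iff_of_le (fun y _ => hTle y)).mp hsum2
    intro y
    have hy := hall y (Finset.mem_univ y)
    rcases (hp' y).lt_or_eq with hpy' | hpy'
    · have hqy : 0 < q y := by
        rcases (hq y).lt_or_eq with h | h
        · exact h
        · exact absurd (habs' y h.symm) (ne_of_gt hpy')
      have hpy := hpos y hqy
      by_contra hne
      have hne1 : p y / p' y ≠ 1 := by
        intro h1
        exact hne ((div_eq_one_iff_eq (ne_of_gt hpy')).mp h1).symm
      have hlog : Real.log (p y / p' y) < p y / p' y - 1 :=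
        Real.log_lt_sub_one_of_pos (div_pos hpy hpy') hne1
      have h2 := mul_lt_mul_of_pos_left hlog hpy'
      have h3 : p' y * (p y / p' y - 1) = p y - p' y := by field_simp
      rw [hT] at hy
      simp only at hy
      nlinarith
    · -- p' y = 0, T y = 0, so p y = 0
      have : T y = 0 := by simp [hT, ← hpy']
      rw [this] at hy
      have : p y = 0 := by linarith
      rw [← hpy', this]


/-- DRO value identity: under the support condition
`supp(D) = supp(ρ · πref)`, any pair `(π, V)` with `π(y|x) > 0` on the support which
makes the residual `R x y - β * ln (π(y|x)/πref(y|x)) - V x` vanish on the support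
satisfies `V x = β * ln ∑_{y : πref(y|x) > 0} πref(y|x) * exp (R x y / β)` and
`π(y|x) = πref(y|x) * exp ((R x y - V x)/β)` — the unique KL-regularized optimum of
`J(π) = E_{x∼ρ}[∑_y π(y|x) R x y - β KL(π(·|x) ∥ πref(·|x))]`. -/
theorem stmt_17 {X Y : Type*} [Fintype X] [Fintype Y] [Nonempty Y]
    (ρ : X → ℝ) (hρ : ∀ x, 0 ≤ ρ x) (hρsum : ∑ x, ρ x = 1)
    (πref : X → Y → ℝ) (hπref : ∀ x y, 0 ≤ πref x y)
    (hπrefsum : ∀ x, ∑ y, πref x y = 1)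
    (R : X → Y → ℝ) (β : ℝ) (hβ : 0 < β)
    (π : X → Y → ℝ) (V : X → ℝ)
    (hπpmf : ∀ x, ∑ y, π x y = 1) (hπnn : ∀ x y, 0 ≤ π x y)
    (habs : ∀ x y, πref x y = 0 → π x y = 0)
    (hπpos : ∀ x y, 0 < ρ x → 0 < πref x y → 0 < π x y)
    (hres : ∀ x y, 0 < ρ x → 0 < πref x y →
      R x y - β * Real.log (π x y / πref x y) - V x = 0)
    (J : (X → Y → ℝ) → ℝ)
    (hJ : ∀ π', J π' = ∑ x, ρ x *
      ((∑ y, π' x y * R x y) - β * ∑ y, π' x y * Real.log (π' x y / πref x y))) :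
    (∀ x, 0 < ρ x →
      V x = β * Real.log (∑ y ∈ Finset.univ.filter (fun y => 0 < πref x y),
        πref x y * Real.exp (R x y / β))) ∧
    (∀ x y, 0 < ρ x → 0 < πref x y →
      π x y = πref x y * Real.exp ((R x y - V x) / β)) ∧
    (∀ π' : X → Y → ℝ, (∀ x y, 0 ≤ π' x y) → (∀ x, ∑ y, π' x y = 1) →
      (∀ x y, πref x y = 0 → π' x y = 0) →
      J π' ≤ J π ∧ (J π' = J π → ∀ x y, 0 < ρ x → π' x y = π x y)) := by
  -- Part 2 first (π formula)
  have hform : ∀ x y, 0 < ρ x → 0 < πref x y →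
      π x y = πref x y * Real.exp ((R x y - V x) / β) := by
    intro x y hx hy
    have hπy := hπpos x y hx hy
    have hlog : Real.log (π x y / πref x y) = (R x y - V x) / β := by
      have h := hres x y hx hy
      field_simp
      linarith
    have hexp : Real.exp ((R x y - V x) / β) = π x y / πref x y := by
      rw [← hlog, Real.exp_log (div_pos hπy hy)]
    rw [hexp]
    field_simp
  -- Part 1 (V formula)
  have hV : ∀ x, 0 < ρ x →
      V x = β * Real.log (∑ y ∈ Finset.univ.filter (fun y => 0 < πref x y),
        πref x y * Real.exp (R x y / β)) := by
    intro x hx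
    set S := Finset.univ.filter (fun y => 0 < πref x y) with hS
    have hsumS : ∑ y ∈ S, π x y = 1 := by
      rw [← hπpmf x]
      apply Finset.sum_subset (Finset.subset_univ S)
      intro y _ hyS
      have : ¬ (0 < πref x y) := by simpa [hS] using hyS
      exact habs x y (le_antisymm (not_lt.mp this) (hπref x y))
    have hkey : (∑ y ∈ S, πref x y * Real.exp (R x y / β)) * Real.exp (-(V x / β)) = 1 := by
      rw [Finset.sum_mul]
      rw [← hsumS]
      apply Finset.sum_congr rfl
      intro y hy
      have hyp : 0 < πref x y := by simpa [hS] using hy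
      rw [hform x y hx hyp]
      rw [mul_assoc, ← Real.exp_add]
      congr 2
      field_simp
      ring
    have hexpV : (∑ y ∈ S, πref x y * Real.exp (R x y / β)) = Real.exp (V x / β) := by
      have h2 := congrArg (· * Real.exp (V x / β)) hkey
      simp only [one_mul] at h2
      rw [mul_assoc, ← Real.exp_add] at h2
      simpa using h2
    rw [hexpV, Real.log_exp]
    field_simp
  refine ⟨hV, hform, ?_⟩
  -- Part 3 (optimality)
  intro π' hπ'nn hπ'pmf habs'
  have hgibbs : ∀ x, 0 < ρ x →
      ((∑ y, π' x y * R x y) - β * ∑ y, π' x y * Real.log (π' x y / πref x y)) ≤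
        ((∑ y, π x y * R x y) - β * ∑ y, π x y * Real.log (π x y / πref x y)) ∧
      (((∑ y, π' x y * R x y) - β * ∑ y, π' x y * Real.log (π' x y / πref x y)) =
        ((∑ y, π x y * R x y) - β * ∑ y, π x y * Real.log (π x y / πref x y)) →
        ∀ y, π' x y = π x y) := by
    intro x hx
    apply gibbs_aux β hβ (πref x) (π x) (π' x) (R x) (V x) (hπref x) (hπnn x)
      (hπpmf x) (hπ'nn x) (hπ'pmf x) (habs x) (habs' x) (fun y hy => hπpos x y hx hy)
    intro y hy
    have := hres x y hx hy
    linarith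
  set A : X → ℝ := fun x =>
    (∑ y, π x y * R x y) - β * ∑ y, π x y * Real.log (π x y / πref x y) with hA
  set A' : X → ℝ := fun x =>
    (∑ y, π' x y * R x y) - β * ∑ y, π' x y * Real.log (π' x y / πref x y) with hA'
  have hle : ∀ x, ρ x * A' x ≤ ρ x * A x := by
    intro x
    rcases (hρ x).lt_or_eq with hx | hx
    · exact mul_le_mul_of_nonneg_left (hgibbs x hx).1 (le_of_lt hx)
    · rw [← hx]; simp
  constructor
  · rw [hJ, hJ]
    exact Finset.sum_le_sum (fun x _ => hle x)
  · intro heq x y hx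
    have hsum0 : ∑ x, (ρ x * A x - ρ x * A' x) = 0 := by
      rw [Finset.sum_sub_distrib]
      have h1 : J π' = ∑ x, ρ x * A' x := hJ π'
      have h2 : J π = ∑ x, ρ x * A x := hJ π
      rw [← h1, ← h2, heq]
      ring
    have hx0 : ρ x * A x - ρ x * A' x = 0 := by
      have := (Finset.sum_eq_zero_iff_of_nonneg
        (fun x _ => by linarith [hle x])).mp hsum0 x (Finset.mem_univ x)
      exact this
    have hAA : A' x = A x := by
      have hρx : ρ x ≠ 0 := ne_of_gt hx
      have : ρ x * (A x - A' x) = 0 := by linarith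
      have := (mul_eq_zero.mp this).resolve_left hρx
      linarith
    exact (hgibbs x hx).2 hAA y
end
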